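/- The trigonometric polynomial f(θ) = 160/240 - (60/240)cos θ - (96/240)cos 2θ - (4/240)cos 3θ is nonnegative on [-π,π] and has a unique zero at θ = 0, which is of order 2 (i.e., f(0) = f'(0) = 0 and f''(0) > 0). -/

import Mathlib

/-!
With `c = cos θ`, the double- and triple-angle formulas factor the symbol as
`f(θ) = (1 - c)(c² + 13c + 16)/15`. The quadratic factor equals `4` at `c = -1` and increases on
`[-1, 1]`, so it is positive, and `f(θ)` vanishes exactly where `cos θ = 1`.
-/

open Real

/-- The IgA symbol `f(θ) = (1/240)(160 - 60 cos θ - 96 cos 2θ - 4 cos 3θ)`. -/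
noncomputable def fIgA (θ : ℝ) : ℝ :=
  (1 / 240) * (160 - 60 * Real.cos θ - 96 * Real.cos (2 * θ) - 4 * Real.cos (3 * θ))

theorem hasDerivAt_cos_const_mul (k x : ℝ) :
    HasDerivAt (fun t => cos (k * t)) (-(k * sin (k * x))) x := by
  simpa [mul_comm] using ((hasDerivAt_id x).const_mul k).cos

theorem hasDerivAt_sin_const_mul (k x : ℝ) :
    HasDerivAt (fun t => sin (k * t)) (k * cos (k * x)) x := by
  simpa [mul_comm] using ((hasDerivAt_id x).const_mul k).sin

theorem hasDerivAt_fIgA (θ : ℝ) :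
    HasDerivAt fIgA ((60 * sin θ + 192 * sin (2 * θ) + 12 * sin (3 * θ)) / 240) θ := by
  have h := ((((hasDerivAt_const θ 160).sub ((hasDerivAt_cos θ).const_mul 60)).sub
    ((hasDerivAt_cos_const_mul 2 θ).const_mul 96)).sub
    ((hasDerivAt_cos_const_mul 3 θ).const_mul 4)).const_mul (1 / 240)
  exact h.congr_deriv (by ring)

theorem deriv_fIgA :
    deriv fIgA = fun θ => (60 * sin θ + 192 * sin (2 * θ) + 12 * sin (3 * θ)) / 240 :=
  funext fun θ => (hasDerivAt_fIgA θ).deriv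

theorem hasDerivAt_deriv_fIgA (θ : ℝ) :
    HasDerivAt (deriv fIgA) ((60 * cos θ + 384 * cos (2 * θ) + 36 * cos (3 * θ)) / 240) θ := by
  rw [deriv_fIgA]
  have h := ((((hasDerivAt_sin θ).const_mul 60).add
    ((hasDerivAt_sin_const_mul 2 θ).const_mul 192)).add
    ((hasDerivAt_sin_const_mul 3 θ).const_mul 12)).div_const 240
  exact h.congr_deriv (by ring)

theorem fIgA_eq (θ : ℝ) : fIgA θ = (1 - cos θ) * (cos θ ^ 2 + 13 * cos θ + 16) / 15 := by
  rw [fIgA, cos_two_mul, cos_three_mul]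
  ring

theorem cos_sq_add_thirteen_mul_cos_add_sixteen_pos (θ : ℝ) : 0 < cos θ ^ 2 + 13 * cos θ + 16 := by
  nlinarith [neg_one_le_cos θ]

theorem fIgA_nonneg (θ : ℝ) : 0 ≤ fIgA θ := by
  rw [fIgA_eq]
  exact div_nonneg (mul_nonneg (sub_nonneg.2 (cos_le_one θ))
    (cos_sq_add_thirteen_mul_cos_add_sixteen_pos θ).le) (by norm_num)

theorem fIgA_eq_zero_iff (θ : ℝ) : fIgA θ = 0 ↔ cos θ = 1 := by
  rw [fIgA_eq, div_eq_zero_iff, mul_eq_zero, sub_eq_zero, eq_comm]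
  simp [(cos_sq_add_thirteen_mul_cos_add_sixteen_pos θ).ne']

/-- `fIgA` is nonnegative on `[-π,π]` with a unique zero at `θ = 0`, which has order 2:
`f(0) = f'(0) = 0` and `f''(0) > 0`. -/
theorem fIgA_nonneg_unique_zero :
    (∀ θ ∈ Set.Icc (-π) π, 0 ≤ fIgA θ ∧ (fIgA θ = 0 ↔ θ = 0)) ∧
    fIgA 0 = 0 ∧ deriv fIgA 0 = 0 ∧ 0 < deriv (deriv fIgA) 0 := by
  refine ⟨fun θ ⟨hlo, hhi⟩ => ⟨fIgA_nonneg θ, ?_⟩, by norm_num [fIgA], by simp [deriv_fIgA], ?_⟩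
  · rw [fIgA_eq_zero_iff,
      cos_eq_one_iff_of_lt_of_lt (by linarith [pi_pos]) (by linarith [pi_pos])]
  · rw [(hasDerivAt_deriv_fIgA 0).deriv]
    norm_num
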